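/- For ε > 0 and r > 0, the integral I₃ᵤᵤ = (1/2)∫₀^∞ k³ e^{−εk} (∫_{−1}^{1} u² cos(kru) du) dk equals (2ε² − 6r²)/(ε² + r²)³. -/

import Mathlib

/-!
With `a = k r`, the inner integral is elementary:
`∫_{-1}^{1} u² cos (a u) du = 2 ((a² - 2) sin a + 2 a cos a) / a³`.
Hence the outer integrand is `(2 / r³) Im ((r² k² + 2 i r k - 2) e^{-(ε - i r) k})`, and the
Laplace transform `∫₀^∞ kⁿ e^{-w k} dk = n! / w^{n+1}` (`Re w > 0`, by integration by parts)
reduces the claim to computing the imaginary part of `2 r² / w³ + 2 i r / w² - 2 / w` at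
`w = ε - i r`, where `1 / w = (ε + i r) / (ε² + r²)`.
-/

open MeasureTheory Real Filter Topology Set
open Complex (I)
open scoped Complex Nat

section LaplaceTransform

variable {w : ℂ}

lemma norm_pow_mul_cexp_neg_mul (n : ℕ) {k : ℝ} (hk : 0 ≤ k) :
    ‖(k : ℂ) ^ n * cexp (-w * k)‖ = k ^ n * rexp (-w.re * k) := by
  rw [norm_mul, norm_pow, Complex.norm_real, Real.norm_of_nonneg hk, Complex.norm_exp]
  simp

lemma integrableOn_pow_mul_cexp_neg_mul (n : ℕ) (hw : 0 < w.re) :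
    IntegrableOn (fun k : ℝ => (k : ℂ) ^ n * cexp (-w * k)) (Ioi 0) := by
  have hreal : IntegrableOn (fun k : ℝ => k ^ n * rexp (-w.re * k)) (Ioi 0) := by
    simpa [Real.rpow_natCast] using integrableOn_rpow_mul_exp_neg_mul_rpow
      (s := n) (p := 1) (by linarith [n.cast_nonneg (α := ℝ)]) one_pos hw
  refine hreal.mono' (by fun_prop) ?_
  filter_upwards [ae_restrict_mem measurableSet_Ioi] with k hk
  exact (norm_pow_mul_cexp_neg_mul n (le_of_lt hk)).le

lemma tendsto_pow_mul_cexp_neg_mul_atTop (n : ℕ) (hw : 0 < w.re) :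
    Tendsto (fun k : ℝ => (k : ℂ) ^ n * cexp (-w * k)) atTop (𝓝 0) := by
  rw [tendsto_zero_iff_norm_tendsto_zero]
  refine (tendsto_rpow_mul_exp_neg_mul_atTop_nhds_zero n w.re hw).congr' ?_
  filter_upwards [eventually_ge_atTop 0] with k hk
  rw [norm_pow_mul_cexp_neg_mul n hk, Real.rpow_natCast]

theorem integral_pow_mul_cexp_neg_mul (n : ℕ) (hw : 0 < w.re) :
    ∫ k in Ioi (0 : ℝ), (k : ℂ) ^ n * cexp (-w * k) = n ! / w ^ (n + 1) := by
  have hw0 : w ≠ 0 := fun h => by simp [h] at hw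
  induction n with
  | zero =>
    simpa [neg_div] using integral_exp_mul_complex_Ioi (a := -w) (by simpa using hw) 0
  | succ n ih =>
    have hu : ∀ k ∈ Ioi (0 : ℝ),
        HasDerivAt (fun t : ℝ => (t : ℂ) ^ (n + 1)) ((n + 1 : ℂ) * k ^ n) k := fun k _ => by
      simpa using (hasDerivAt_pow (n + 1) (k : ℂ)).comp_ofReal
    have hv : ∀ k ∈ Ioi (0 : ℝ),
        HasDerivAt (fun t : ℝ => -w⁻¹ * cexp (-w * t)) (cexp (-w * k)) k := fun k _ => by
      have hlin : HasDerivAt (fun t : ℝ => -w * t) (-w) k := by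
        simpa using (hasDerivAt_id k).ofReal_comp.const_mul (-w)
      exact (hlin.cexp.const_mul (-w⁻¹)).congr_deriv (by field_simp)
    have huv_cont : Continuous fun t : ℝ => (t : ℂ) ^ (n + 1) * (-w⁻¹ * cexp (-w * t)) := by
      fun_prop
    have huv_zero : Tendsto (fun t : ℝ => (t : ℂ) ^ (n + 1) * (-w⁻¹ * cexp (-w * t)))
        (𝓝[>] 0) (𝓝 0) := by
      simpa using (huv_cont.tendsto 0).mono_left nhdsWithin_le_nhds
    have huv_top : Tendsto (fun t : ℝ => (t : ℂ) ^ (n + 1) * (-w⁻¹ * cexp (-w * t)))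
        atTop (𝓝 0) := by
      simpa [mul_left_comm] using
        (tendsto_pow_mul_cexp_neg_mul_atTop (n + 1) hw).const_mul (-w⁻¹)
    have hu'v : IntegrableOn (fun k : ℝ => (n + 1 : ℂ) * k ^ n * (-w⁻¹ * cexp (-w * k)))
        (Ioi 0) := by
      refine IntegrableOn.congr_fun ((integrableOn_pow_mul_cexp_neg_mul n hw).const_mul
        (-(n + 1 : ℂ) * w⁻¹)) (fun k _ => ?_) measurableSet_Ioi
      ring
    rw [integral_Ioi_mul_deriv_eq_deriv_mul hu hv (integrableOn_pow_mul_cexp_neg_mul (n + 1) hw)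
      hu'v huv_zero huv_top]
    calc 0 - 0 - ∫ k in Ioi (0 : ℝ), (n + 1 : ℂ) * k ^ n * (-w⁻¹ * cexp (-w * k))
        = (n + 1 : ℂ) * w⁻¹ * ∫ k in Ioi (0 : ℝ), (k : ℂ) ^ n * cexp (-w * k) := by
          rw [sub_zero, zero_sub, ← integral_neg, ← integral_const_mul]
          congr 1 with k
          ring
      _ = (n + 1)! / w ^ (n + 1 + 1) := by
          rw [ih, Nat.factorial_succ]
          push_cast
          field_simp
          ring

lemma integrableOn_quadratic_mul_cexp_neg_mul (a b c : ℂ) (hw : 0 < w.re) :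
    IntegrableOn (fun k : ℝ => (a * k ^ 2 + b * k + c) * cexp (-w * k)) (Ioi 0) := by
  have h (n : ℕ) := integrableOn_pow_mul_cexp_neg_mul n hw
  refine IntegrableOn.congr_fun ((((h 2).const_mul a).add ((h 1).const_mul b)).add
    ((h 0).const_mul c)) (fun k _ => ?_) measurableSet_Ioi
  simp only [Pi.add_apply]
  ring

theorem integral_quadratic_mul_cexp_neg_mul (a b c : ℂ) (hw : 0 < w.re) :
    ∫ k in Ioi (0 : ℝ), (a * k ^ 2 + b * k + c) * cexp (-w * k)
      = 2 * a / w ^ 3 + b / w ^ 2 + c / w := by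
  have h (n : ℕ) := integrableOn_pow_mul_cexp_neg_mul (w := w) n hw
  have hsplit : ∀ k : ℝ, (a * k ^ 2 + b * k + c) * cexp (-w * k) = a * (k ^ 2 * cexp (-w * k))
      + b * (k ^ 1 * cexp (-w * k)) + c * (k ^ 0 * cexp (-w * k)) := fun k => by ring
  simp_rw [hsplit]
  rw [integral_add ?_ ((h 0).const_mul c), integral_add ((h 2).const_mul a) ((h 1).const_mul b),
    integral_const_mul, integral_const_mul, integral_const_mul, integral_pow_mul_cexp_neg_mul 2 hw,
    integral_pow_mul_cexp_neg_mul 1 hw, integral_pow_mul_cexp_neg_mul 0 hw]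
  · norm_num
    ring
  · exact ((h 2).const_mul a).add ((h 1).const_mul b)

end LaplaceTransform

lemma integral_sq_mul_cos_mul {a : ℝ} (ha : a ≠ 0) :
    ∫ u in (-1 : ℝ)..1, u ^ 2 * cos (a * u)
      = 2 * ((a ^ 2 - 2) * sin a + 2 * a * cos a) / a ^ 3 := by
  have hF : ∀ u : ℝ, HasDerivAt
      (fun u => ((a * u) ^ 2 - 2) * sin (a * u) / a ^ 3 + 2 * u * cos (a * u) / a ^ 2)
      (u ^ 2 * cos (a * u)) u := fun u => by
    have hlin : HasDerivAt (fun u : ℝ => a * u) a u := by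
      simpa using (hasDerivAt_id u).const_mul a
    have := ((((hlin.pow 2).sub_const 2).mul hlin.sin).div_const (a ^ 3)).add
      ((((hasDerivAt_id u).const_mul 2).mul hlin.cos).div_const (a ^ 2))
    refine this.congr_deriv ?_
    simp only [Pi.pow_apply, id]
    field_simp
    ring
  have hcont : Continuous fun u : ℝ => u ^ 2 * cos (a * u) := by fun_prop
  rw [intervalIntegral.integral_eq_sub_of_hasDerivAt (fun u _ => hF u)
    (hcont.intervalIntegrable _ _)]
  simp only [mul_one, mul_neg, sin_neg, cos_neg]
  field_simp
  ring

lemma im_mul_cexp_neg_mul (z : ℂ) (ε r k : ℝ) :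
    (z * cexp (-(ε - r * I) * k)).im
      = rexp (-ε * k) * (z.re * sin (r * k) + z.im * cos (r * k)) := by
  have hexp : -(ε - r * I) * k = ((-ε * k : ℝ) : ℂ) + ((r * k : ℝ) : ℂ) * I := by
    push_cast
    ring
  rw [hexp, Complex.exp_add_mul_I, ← Complex.ofReal_exp, ← Complex.ofReal_cos,
    ← Complex.ofReal_sin]
  simp only [Complex.mul_im, Complex.mul_re, Complex.add_re, Complex.add_im, Complex.ofReal_re,
    Complex.ofReal_im, Complex.I_re, Complex.I_im]
  ring

theorem integral_im_quadratic_mul_cexp_neg_mul {ε : ℝ} (hε : 0 < ε) (r : ℝ) :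
    ∫ k in Ioi (0 : ℝ),
        (((r : ℂ) ^ 2 * k ^ 2 + 2 * r * I * k + (-2)) * cexp (-(ε - r * I) * k)).im
      = 2 * r ^ 3 * (ε ^ 2 - 3 * r ^ 2) / (ε ^ 2 + r ^ 2) ^ 3 := by
  have hw : 0 < ((ε : ℂ) - r * I).re := by simpa using hε
  refine (integral_im (integrableOn_quadratic_mul_cexp_neg_mul _ _ _ hw)).trans ?_
  rw [RCLike.im_to_complex, integral_quadratic_mul_cexp_neg_mul _ _ _ hw]
  set D : ℝ := ε ^ 2 + r ^ 2
  have hD : D ≠ 0 := by positivity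
  have hconj : ((ε : ℂ) - r * I) * (ε + r * I) = D := by
    push_cast [D]
    ring_nf
    rw [Complex.I_sq]
    ring
  have hrat :
      2 * (r : ℂ) ^ 2 / (ε - r * I) ^ 3 + 2 * r * I / (ε - r * I) ^ 2 + (-2) / (ε - r * I)
      = (2 * r ^ 2 * (ε + r * I) ^ 3 + 2 * r * I * (ε + r * I) ^ 2 * D - 2 * (ε + r * I) * D ^ 2)
        / ((D ^ 3 : ℝ) : ℂ) := by
    obtain ⟨hw0, hv0⟩ := mul_ne_zero_iff.mp (hconj ▸ Complex.ofReal_ne_zero.mpr hD)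
    rw [Complex.ofReal_pow, ← hconj]
    -- once `D` is written as `w * v`, the identity holds in any field
    generalize (ε : ℂ) - r * I = w at hw0 ⊢
    generalize (ε : ℂ) + r * I = v at hv0 ⊢
    field_simp
    ring
  rw [hrat, Complex.div_ofReal_im]
  simp only [pow_succ, pow_zero, one_mul, Complex.ofReal_add, Complex.ofReal_mul, Complex.sub_im,
    Complex.add_im, Complex.mul_im, Complex.mul_re, Complex.re_ofNat, Complex.ofReal_re,
    Complex.ofReal_im, mul_zero, sub_zero, Complex.im_ofNat, zero_mul, add_zero, Complex.add_re,
    Complex.I_re, Complex.I_im, mul_one, sub_self, zero_add, zero_sub, D]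
  field_simp
  ring

lemma pow_three_mul_exp_mul_integral_sq_mul_cos_eq_im {ε r k : ℝ} (hr : r ≠ 0) (hk : k ≠ 0) :
    k ^ 3 * rexp (-ε * k) * ∫ u in (-1 : ℝ)..1, u ^ 2 * cos (k * r * u)
      = 2 / r ^ 3
        * (((r : ℂ) ^ 2 * k ^ 2 + 2 * r * I * k + (-2)) * cexp (-(ε - r * I) * k)).im := by
  have hz : (r : ℂ) ^ 2 * k ^ 2 + 2 * r * I * k + (-2)
      = ((k * r) ^ 2 - 2 : ℝ) + (2 * (k * r) : ℝ) * I := by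
    push_cast
    ring
  rw [integral_sq_mul_cos_mul (mul_ne_zero hk hr), hz, im_mul_cexp_neg_mul]
  simp only [Complex.add_re, Complex.add_im, Complex.ofReal_re, Complex.ofReal_im,
    Complex.re_ofReal_mul, Complex.im_ofReal_mul, Complex.I_re, Complex.I_im]
  field_simp
  ring

theorem I3uu_integral (ε r : ℝ) (hε : 0 < ε) (hr : 0 < r) :
    (1 / 2) * ∫ k in Set.Ioi (0 : ℝ),
        k ^ 3 * Real.exp (-ε * k) * ∫ u in (-1 : ℝ)..1, u ^ 2 * Real.cos (k * r * u)
      = (2 * ε ^ 2 - 6 * r ^ 2) / (ε ^ 2 + r ^ 2) ^ 3 := by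
  rw [setIntegral_congr_fun measurableSet_Ioi fun k hk =>
      pow_three_mul_exp_mul_integral_sq_mul_cos_eq_im hr.ne' (ne_of_gt hk),
    integral_const_mul, integral_im_quadratic_mul_cexp_neg_mul hε]
  field_simp
  ring
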